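/- Let H₁,…,H_N and K₁,…,K_M be finite-dimensional Hilbert spaces, and let Γ_k : Z → B(H_k), Ω_r : Z → B(K_r) be unital self-adjoint linear maps on a finite-dimensional *-vector space Z with unit, such that each Γ_k(Z) and each Ω_r(Z) is irreducible, and such that the weak separation property holds: any two of the M+N coordinate maps can be distinguished by the norm of some matrix over Z. Then the C*-algebra generated by S_{Γ,Ω} = {Γ₁(z)⊕…⊕Γ_N(z)⊕Ω₁(z)⊕…⊕Ω_M(z) : z ∈ Z} is the full direct sum B(H₁)⊕…⊕B(H_N)⊕B(K₁)⊕…⊕B(K_M). -/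

import Mathlib

/-- The operator on the `ℓ²` direct sum of `p` copies of `E` determined by a `p × p`
matrix of operators on `E`. -/
noncomputable def matOp {E : Type*} [NormedAddCommGroup E] [InnerProductSpace ℂ E]
    [FiniteDimensional ℂ E] {p : ℕ} (M : Matrix (Fin p) (Fin p) (E →L[ℂ] E)) :
    PiLp 2 (fun _ : Fin p => E) →L[ℂ] PiLp 2 (fun _ : Fin p => E) :=
  LinearMap.toContinuousLinearMap
    { toFun := fun v => WithLp.toLp 2 (fun i => ∑ j, M i j (v j))
      map_add' := by
        intro v w; apply WithLp.ofLp_injective; funext i; simp [Finset.sum_add_distrib]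
      map_smul' := by
        intro c v; apply WithLp.ofLp_injective; funext i; simp [Finset.smul_sum] }

/-- The block-diagonal operator `T₁ ⊕ ⋯ ⊕ T_N ⊕ R₁ ⊕ ⋯ ⊕ R_M` on the `ℓ²` direct sum
`H₁ ⊕ ⋯ ⊕ H_N ⊕ K₁ ⊕ ⋯ ⊕ K_M`. -/
noncomputable def combOp {N M : ℕ} {H : Fin N → Type*} [∀ k, NormedAddCommGroup (H k)]
    [∀ k, InnerProductSpace ℂ (H k)] [∀ k, FiniteDimensional ℂ (H k)]
    {K : Fin M → Type*} [∀ r, NormedAddCommGroup (K r)]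
    [∀ r, InnerProductSpace ℂ (K r)] [∀ r, FiniteDimensional ℂ (K r)]
    (T : ∀ k, H k →L[ℂ] H k) (R : ∀ r, K r →L[ℂ] K r) :
    WithLp 2 (PiLp 2 H × PiLp 2 K) →L[ℂ] WithLp 2 (PiLp 2 H × PiLp 2 K) :=
  LinearMap.toContinuousLinearMap
    { toFun := fun v => WithLp.toLp 2 ((WithLp.toLp 2 (fun k => T k (v.ofLp.1 k)),
          WithLp.toLp 2 (fun r => R r (v.ofLp.2 r))) : PiLp 2 H × PiLp 2 K)
      map_add' := by
        intro v w; apply WithLp.ofLp_injective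
        refine Prod.ext ?_ ?_ <;> apply WithLp.ofLp_injective <;> funext i <;> simp
      map_smul' := by
        intro c v; apply WithLp.ofLp_injective
        refine Prod.ext ?_ ?_ <;> apply WithLp.ofLp_injective <;> funext i <;> simp }


/-! Let `S` commute with every generator `Γ(z) ⊕ Ω(z)`. Each block `B` of `S` from one summand to
another intertwines the two coordinate maps, so by irreducibility `B† B` and `B B†` are scalars.
If `B ≠ 0`, then `B` and `B†` are positive multiples of isometries, and intertwining through their
amplifications gives the two coordinate maps the same matrix norms at every level, which weak
separation excludes. So the off-diagonal blocks of `S` vanish and its diagonal blocks are scalars,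
and every block-diagonal operator lies in the double commutant of the generators. By the
finite-dimensional double commutant theorem, that is the generated C*-algebra `A`. For that
theorem: as `A` is *-closed, the orthogonal projection onto a cyclic subspace `A v` commutes with
`A`, so the double commutant maps `v` into `A v`; apply this to the diagonal amplification of `A`
on `Vⁿ` and the vector `(b₁, …, bₙ)` of a basis. -/

open ContinuousLinearMap Module.End

lemma ContinuousLinearMap.opNorm_le_of_comp_eq {𝕜 X Y : Type*} [NontriviallyNormedField 𝕜]
    [SeminormedAddCommGroup X] [NormedSpace 𝕜 X] [SeminormedAddCommGroup Y] [NormedSpace 𝕜 Y]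
    {A : X →L[𝕜] X} {B : Y →L[𝕜] Y} {J : Y →L[𝕜] X} {κ : ℝ} (hκ : 0 < κ)
    (hJ : ∀ y, ‖J y‖ = κ * ‖y‖) (h : A ∘L J = J ∘L B) : ‖B‖ ≤ ‖A‖ := by
  refine opNorm_le_bound _ (norm_nonneg A) fun y => le_of_mul_le_mul_left ?_ hκ
  calc κ * ‖B y‖ = ‖A (J y)‖ := by rw [← hJ, ← comp_apply, ← h, comp_apply]
    _ ≤ ‖A‖ * ‖J y‖ := le_opNorm A _
    _ = κ * (‖A‖ * ‖y‖) := by rw [hJ]; ring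

section RCLike

variable {𝕜 : Type*} [RCLike 𝕜]

lemma ContinuousLinearMap.exists_pos_norm_apply_eq_of_adjoint_comp_self_eq_smul
    {E F : Type*} [NormedAddCommGroup E] [InnerProductSpace 𝕜 E] [CompleteSpace E]
    [NormedAddCommGroup F] [InnerProductSpace 𝕜 F] [CompleteSpace F]
    {S : F →L[𝕜] E} (hS : S ≠ 0) {c : 𝕜} (h : adjoint S ∘L S = c • 1) :
    ∃ κ > 0, ∀ x, ‖S x‖ = κ * ‖x‖ := by
  have hsq : ∀ x, ‖S x‖ ^ 2 = RCLike.re c * ‖x‖ ^ 2 := fun x => by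
    rw [apply_norm_sq_eq_inner_adjoint_left, h]
    simp [inner_smul_left, inner_self_eq_norm_sq_to_K]
  obtain ⟨x₀, hx₀⟩ : ∃ x, S x ≠ 0 := by
    by_contra! h0
    exact hS (ext h0)
  have hc : 0 < RCLike.re c := pos_of_mul_pos_left (by rw [← hsq]; positivity) (by positivity)
  refine ⟨√(RCLike.re c), Real.sqrt_pos.mpr hc, fun x => ?_⟩
  rw [← Real.sqrt_sq (norm_nonneg (S x)), hsq, Real.sqrt_mul hc.le, Real.sqrt_sq (norm_nonneg x)]

section Amplification

variable {ι : Type*} [Fintype ι] {E F : Type*} [NormedAddCommGroup E] [InnerProductSpace 𝕜 E]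
  [NormedAddCommGroup F] [InnerProductSpace 𝕜 F]

noncomputable def diagOp (ι : Type*) [Fintype ι] (S : F →L[𝕜] E) :
    PiLp 2 (fun _ : ι => F) →L[𝕜] PiLp 2 (fun _ : ι => E) :=
  (PiLp.continuousLinearEquiv 2 𝕜 _).symm.toContinuousLinearMap ∘L
    piMap (fun _ => S) ∘L (PiLp.continuousLinearEquiv 2 𝕜 _).toContinuousLinearMap

@[simp] lemma diagOp_apply (S : F →L[𝕜] E) (v : PiLp 2 (fun _ : ι => F)) (i : ι) :
    diagOp ι S v i = S (v i) := rfl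

lemma norm_diagOp_apply {S : F →L[𝕜] E} {κ : ℝ} (hκ : 0 ≤ κ) (hS : ∀ x, ‖S x‖ = κ * ‖x‖)
    (v : PiLp 2 (fun _ : ι => F)) : ‖diagOp ι S v‖ = κ * ‖v‖ := by
  simp only [PiLp.norm_eq_of_L2, diagOp_apply, hS, mul_pow, ← Finset.mul_sum]
  rw [Real.sqrt_mul (by positivity), Real.sqrt_sq hκ]

lemma adjoint_diagOp [CompleteSpace E] [CompleteSpace F] (S : F →L[𝕜] E) :
    adjoint (diagOp ι S) = diagOp ι (adjoint S) := by
  refine ((eq_adjoint_iff _ _).mpr fun x y => ?_).symm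
  simp [PiLp.inner_apply, adjoint_inner_left]

variable [DecidableEq ι]

noncomputable def PiLp.singleL (i : ι) : E →L[𝕜] PiLp 2 (fun _ : ι => E) :=
  (PiLp.continuousLinearEquiv 2 𝕜 _).symm.toContinuousLinearMap ∘L
    ContinuousLinearMap.single 𝕜 (fun _ : ι => E) i

lemma apply_eq_sum_proj_comp_comp_singleL
    (S : PiLp 2 (fun _ : ι => E) →L[𝕜] PiLp 2 (fun _ : ι => E)) (v : PiLp 2 (fun _ : ι => E))
    (i : ι) : S v i = ∑ j, (PiLp.proj 2 _ i ∘L S ∘L PiLp.singleL j) (v j) :=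
  (sum_comp_single 𝕜 _ (PiLp.proj 2 _ i ∘L S ∘L
    (PiLp.continuousLinearEquiv 2 𝕜 _).symm.toContinuousLinearMap) v.ofLp).symm

lemma diagOp_comp_singleL (S : F →L[𝕜] E) (j : ι) :
    diagOp ι S ∘L PiLp.singleL j = PiLp.singleL j ∘L S := by
  ext x i
  by_cases h : i = j
  · subst h; simp [PiLp.singleL]
  · simp [PiLp.singleL, h]

lemma commute_proj_comp_comp_singleL {a : E →L[𝕜] E}
    {S : PiLp 2 (fun _ : ι => E) →L[𝕜] PiLp 2 (fun _ : ι => E)} (h : Commute (diagOp ι a) S)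
    (i j : ι) : Commute a (PiLp.proj 2 _ i ∘L S ∘L PiLp.singleL j) :=
  calc a ∘L PiLp.proj 2 _ i ∘L S ∘L PiLp.singleL j
      = PiLp.proj 2 _ i ∘L (diagOp ι a ∘L S) ∘L PiLp.singleL j := rfl
    _ = PiLp.proj 2 _ i ∘L S ∘L diagOp ι a ∘L PiLp.singleL j := by
      rw [show diagOp ι a ∘L S = S ∘L diagOp ι a from h.eq]; rfl
    _ = (PiLp.proj 2 _ i ∘L S ∘L PiLp.singleL j) ∘L a := by rw [diagOp_comp_singleL]; rfl

lemma commute_diagOp_of_forall_commute {T : E →L[𝕜] E}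
    {S : PiLp 2 (fun _ : ι => E) →L[𝕜] PiLp 2 (fun _ : ι => E)}
    (h : ∀ i j, Commute T (PiLp.proj 2 _ i ∘L S ∘L PiLp.singleL j)) : Commute (diagOp ι T) S := by
  ext v i
  change T (S v i) = S (diagOp ι T v) i
  simp only [apply_eq_sum_proj_comp_comp_singleL S, map_sum, diagOp_apply]
  exact Finset.sum_congr rfl fun j _ => congr($((h i j).eq) (v j))

end Amplification

noncomputable def diagStarAlgHom (ι : Type*) [Fintype ι] (V : Type*) [NormedAddCommGroup V]
    [InnerProductSpace 𝕜 V] [CompleteSpace V] :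
    (V →L[𝕜] V) →⋆ₐ[𝕜] (PiLp 2 (fun _ : ι => V) →L[𝕜] PiLp 2 (fun _ : ι => V)) where
  toFun := diagOp ι
  map_one' := rfl
  map_mul' _ _ := rfl
  map_zero' := rfl
  map_add' _ _ := rfl
  commutes' r := by ext; simp [Algebra.algebraMap_eq_smul_one]
  map_star' S := by simp only [star_eq_adjoint, adjoint_diagOp]

section DoubleCommutant

variable {V : Type*} [NormedAddCommGroup V] [InnerProductSpace 𝕜 V] [CompleteSpace V]
  [FiniteDimensional 𝕜 V]

lemma commute_starProjection_of_mem_invtSubmodule {U : Submodule 𝕜 V} {T : V →L[𝕜] V}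
    (hT : U ∈ invtSubmodule T.toLinearMap) (hT' : U ∈ invtSubmodule (adjoint T).toLinearMap) :
    Commute U.starProjection T :=
  U.isIdempotentElem_starProjection.commute_iff.mpr
    ⟨by rwa [Submodule.range_starProjection],
      by rw [Submodule.ker_starProjection]; exact orthogonal_mem_invtSubmodule hT'⟩

lemma exists_mem_apply_eq_of_mem_centralizer_centralizer (A : StarSubalgebra 𝕜 (V →L[𝕜] V))
    {T : V →L[𝕜] V} (hT : T ∈ Set.centralizer (Set.centralizer (A : Set (V →L[𝕜] V)))) (v : V) :
    ∃ a ∈ A, T v = a v := by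
  let W : Submodule 𝕜 V := (Subalgebra.toSubmodule A.toSubalgebra).map (apply 𝕜 V v).toLinearMap
  have hW : ∀ a ∈ A, W ∈ invtSubmodule a.toLinearMap := by
    intro a ha
    rw [mem_invtSubmodule_iff_forall_mem_of_mem]
    rintro _ ⟨b, hb, rfl⟩
    exact ⟨a * b, A.mul_mem ha hb, rfl⟩
  have hP : W.starProjection ∈ Set.centralizer (A : Set (V →L[𝕜] V)) := fun a ha =>
    (commute_starProjection_of_mem_invtSubmodule (hW a ha) (hW _ (star_mem ha))).eq.symm
  have hv : v ∈ W := ⟨1, one_mem A, rfl⟩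
  obtain ⟨a, ha, hav⟩ : T v ∈ W := by
    rw [← W.starProjection_eq_self_iff.mpr hv, ← mul_apply_eq_comp, ← hT _ hP]
    exact W.starProjection_apply_mem _
  exact ⟨a, ha, hav.symm⟩

theorem StarSubalgebra.centralizer_centralizer_eq_of_finiteDimensional
    (A : StarSubalgebra 𝕜 (V →L[𝕜] V)) :
    Set.centralizer (Set.centralizer (A : Set (V →L[𝕜] V))) = A := by
  refine subset_antisymm (fun T hT => ?_) Set.subset_centralizer_centralizer
  let b := Module.finBasis 𝕜 V
  let An := A.map (diagStarAlgHom (Fin (Module.finrank 𝕜 V)) V)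
  have hTn : diagOp _ T ∈ Set.centralizer (Set.centralizer (SetLike.coe An)) := fun S hS =>
    (commute_diagOp_of_forall_commute fun i j => (hT _ fun a ha =>
      (commute_proj_comp_comp_singleL (hS _ ⟨a, ha, rfl⟩) i j).eq).symm).eq.symm
  obtain ⟨_, ⟨a, ha, rfl⟩, hTa⟩ :=
    exists_mem_apply_eq_of_mem_centralizer_centralizer _ hTn (WithLp.toLp 2 fun i => b i)
  obtain rfl : T = a := coe_injective (b.ext fun i => congr($hTa i))
  exact ha

end DoubleCommutant

end RCLike

section Intertwines

variable {Z : Type*} {E F G : Type*} [NormedAddCommGroup E] [InnerProductSpace ℂ E]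
  [NormedAddCommGroup F] [InnerProductSpace ℂ F] [NormedAddCommGroup G] [InnerProductSpace ℂ G]
  {φ : Z → (E →L[ℂ] E)} {ψ : Z → (F →L[ℂ] F)}

def Intertwines (φ : Z → (E →L[ℂ] E)) (ψ : Z → (F →L[ℂ] F)) (S : F →L[ℂ] E) : Prop :=
  ∀ z, φ z ∘L S = S ∘L ψ z

def HasScalarCommutant (φ : Z → (E →L[ℂ] E)) : Prop :=
  ∀ T : E →L[ℂ] E, (∀ z, T * φ z = φ z * T) → ∃ c : ℂ, T = c • 1

lemma Intertwines.comp {χ : Z → (G →L[ℂ] G)} {S : F →L[ℂ] E} {T : G →L[ℂ] F}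
    (hS : Intertwines φ ψ S) (hT : Intertwines ψ χ T) : Intertwines φ χ (S ∘L T) := fun z => by
  rw [← comp_assoc, hS z, comp_assoc, hT z, comp_assoc]

lemma HasScalarCommutant.exists_eq_smul_one {T : E →L[ℂ] E} (hφ : HasScalarCommutant φ)
    (hT : Intertwines φ φ T) : ∃ c : ℂ, T = c • 1 :=
  hφ T fun z => (hT z).symm

lemma Intertwines.adjoint_swap [Star Z] [CompleteSpace E] [CompleteSpace F] {S : F →L[ℂ] E}
    (hφ : ∀ z, φ (star z) = star (φ z)) (hψ : ∀ z, ψ (star z) = star (ψ z))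
    (hS : Intertwines φ ψ S) : Intertwines ψ φ (adjoint S) := fun z => by
  simpa [hφ, hψ, adjoint_comp, star_eq_adjoint] using congr(adjoint $(hS (star z))).symm

variable [FiniteDimensional ℂ E] [FiniteDimensional ℂ F]

lemma Intertwines.matOp_comp_diagOp {S : F →L[ℂ] E} (hS : Intertwines φ ψ S) {p : ℕ}
    (zm : Matrix (Fin p) (Fin p) Z) :
    matOp (zm.map φ) ∘L diagOp (Fin p) S = diagOp (Fin p) S ∘L matOp (zm.map ψ) := by
  ext v i
  change ∑ j, φ (zm i j) (S (v j)) = S (∑ j, ψ (zm i j) (v j))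
  rw [map_sum]
  exact Finset.sum_congr rfl fun j _ => congr($(hS (zm i j)) (v j))

lemma Intertwines.norm_matOp_le {S : F →L[ℂ] E} (hS : Intertwines φ ψ S) (hS0 : S ≠ 0)
    (hψ : HasScalarCommutant ψ) (hS' : Intertwines ψ φ (ContinuousLinearMap.adjoint S)) {p : ℕ}
    (zm : Matrix (Fin p) (Fin p) Z) : ‖matOp (zm.map ψ)‖ ≤ ‖matOp (zm.map φ)‖ := by
  obtain ⟨c, hc⟩ := hψ.exists_eq_smul_one (hS'.comp hS)
  obtain ⟨κ, hκ, hSκ⟩ := exists_pos_norm_apply_eq_of_adjoint_comp_self_eq_smul hS0 hc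
  exact opNorm_le_of_comp_eq hκ (norm_diagOp_apply hκ.le hSκ) (hS.matOp_comp_diagOp zm)

lemma Intertwines.eq_zero_of_norm_matOp_ne [Star Z] {S : F →L[ℂ] E} (hS : Intertwines φ ψ S)
    (hφ : ∀ z, φ (star z) = star (φ z)) (hψ : ∀ z, ψ (star z) = star (ψ z))
    (hφirr : HasScalarCommutant φ) (hψirr : HasScalarCommutant ψ)
    (hsep : ∃ p : ℕ, ∃ zm : Matrix (Fin p) (Fin p) Z, ‖matOp (zm.map φ)‖ ≠ ‖matOp (zm.map ψ)‖) :
    S = 0 := by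
  by_contra hS0
  obtain ⟨p, zm, hne⟩ := hsep
  have hS' := hS.adjoint_swap hφ hψ
  have hS'0 : adjoint S ≠ 0 := by rwa [ne_eq, LinearIsometryEquiv.map_eq_zero_iff]
  refine hne (le_antisymm ?_ (hS.norm_matOp_le hS0 hψirr hS' zm))
  exact hS'.norm_matOp_le hS'0 hφirr (by rwa [adjoint_adjoint]) zm

end Intertwines

section DirectSum

variable {N M : ℕ}
  {H : Fin N → Type*} [∀ k, NormedAddCommGroup (H k)] [∀ k, InnerProductSpace ℂ (H k)]
  {K : Fin M → Type*} [∀ r, NormedAddCommGroup (K r)] [∀ r, InnerProductSpace ℂ (K r)]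

local notation "W" => WithLp 2 (PiLp 2 H × PiLp 2 K)

noncomputable def projH (i : Fin N) : W →L[ℂ] H i :=
  PiLp.proj 2 H i ∘L WithLp.fstL 2 ℂ (PiLp 2 H) (PiLp 2 K)

noncomputable def projK (r : Fin M) : W →L[ℂ] K r :=
  PiLp.proj 2 K r ∘L WithLp.sndL 2 ℂ (PiLp 2 H) (PiLp 2 K)

noncomputable def inclH (j : Fin N) : H j →L[ℂ] W :=
  (WithLp.prodContinuousLinearEquiv 2 ℂ _ _).symm.toContinuousLinearMap ∘L
    ContinuousLinearMap.inl ℂ _ _ ∘L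
    (PiLp.continuousLinearEquiv 2 ℂ H).symm.toContinuousLinearMap ∘L single ℂ H j

noncomputable def inclK (s : Fin M) : K s →L[ℂ] W :=
  (WithLp.prodContinuousLinearEquiv 2 ℂ _ _).symm.toContinuousLinearMap ∘L
    ContinuousLinearMap.inr ℂ _ _ ∘L
    (PiLp.continuousLinearEquiv 2 ℂ K).symm.toContinuousLinearMap ∘L single ℂ K s

lemma sum_inclH_comp_projH_add_sum_inclK_comp_projK :
    ∑ j, (inclH j ∘L projH j : W →L[ℂ] W) + ∑ s, (inclK s ∘L projK s : W →L[ℂ] W) = 1 := by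
  ext v : 1
  refine WithLp.ofLp_injective 2 (Prod.ext (PiLp.ext fun i => ?_) (PiLp.ext fun r => ?_))
  · simp [inclH, projH, inclK, projK, Prod.fst_sum, WithLp.ofLp_sum, Finset.sum_apply]
  · simp [inclH, projH, inclK, projK, Prod.snd_sum, WithLp.ofLp_sum, Finset.sum_apply]

lemma eq_sum_comp_projH_add_sum_comp_projK {X : Type*} [NormedAddCommGroup X] [NormedSpace ℂ X]
    (Q : W →L[ℂ] X) :
    Q = ∑ j, (Q ∘L inclH j) ∘L projH (K := K) j + ∑ s, (Q ∘L inclK s) ∘L projK (H := H) s := by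
  conv_lhs => rw [← comp_id Q, ← one_def, ← sum_inclH_comp_projH_add_sum_inclK_comp_projK]
  simp only [comp_add, comp_finsetSum, comp_assoc]

lemma eq_comp_projH_of_forall_comp_eq_zero {X : Type*} [NormedAddCommGroup X] [NormedSpace ℂ X]
    {Q : W →L[ℂ] X} {i : Fin N} (hH : ∀ j, j ≠ i → Q ∘L inclH j = 0)
    (hK : ∀ s, Q ∘L inclK s = 0) : Q = (Q ∘L inclH i) ∘L projH (K := K) i := by
  conv_lhs => rw [eq_sum_comp_projH_add_sum_comp_projK Q]
  rw [Finset.sum_eq_single i (fun j _ hj => by rw [hH j hj, zero_comp]) (by simp),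
    Finset.sum_eq_zero fun s _ => by rw [hK s, zero_comp], add_zero]

lemma eq_comp_projK_of_forall_comp_eq_zero {X : Type*} [NormedAddCommGroup X] [NormedSpace ℂ X]
    {Q : W →L[ℂ] X} {r : Fin M} (hH : ∀ j, Q ∘L inclH j = 0)
    (hK : ∀ s, s ≠ r → Q ∘L inclK s = 0) : Q = (Q ∘L inclK r) ∘L projK (H := H) r := by
  conv_lhs => rw [eq_sum_comp_projH_add_sum_comp_projK Q]
  rw [Finset.sum_eq_zero fun j _ => by rw [hH j, zero_comp],
    Finset.sum_eq_single r (fun s _ hs => by rw [hK s hs, zero_comp]) (by simp), zero_add]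

variable [∀ k, FiniteDimensional ℂ (H k)] [∀ r, FiniteDimensional ℂ (K r)]

variable (T : ∀ k, H k →L[ℂ] H k) (R : ∀ r, K r →L[ℂ] K r)

lemma projH_comp_combOp (i : Fin N) : projH i ∘L combOp T R = T i ∘L projH (K := K) i := rfl

lemma projK_comp_combOp (r : Fin M) : projK r ∘L combOp T R = R r ∘L projK (H := H) r := rfl

lemma combOp_comp_inclH (j : Fin N) : combOp T R ∘L inclH j = inclH (K := K) j ∘L T j := by
  ext x : 1
  refine WithLp.ofLp_injective 2 (Prod.ext (PiLp.ext fun i => ?_) (PiLp.ext fun r => ?_))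
  · by_cases h : i = j
    · subst h; simp [inclH, combOp]
    · simp [inclH, combOp, h]
  · simp [inclH, combOp]

lemma combOp_comp_inclK (s : Fin M) : combOp T R ∘L inclK s = inclK (H := H) s ∘L R s := by
  ext x : 1
  refine WithLp.ofLp_injective 2 (Prod.ext (PiLp.ext fun i => ?_) (PiLp.ext fun r => ?_))
  · simp [inclK, combOp]
  · by_cases h : r = s
    · subst h; simp [inclK, combOp]
    · simp [inclK, combOp, h]

lemma eq_combOp_of_forall {S : W →L[ℂ] W} (hH : ∀ i, projH i ∘L S = T i ∘L projH (K := K) i)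
    (hK : ∀ r, projK r ∘L S = R r ∘L projK (H := H) r) : S = combOp T R := by
  ext v : 1
  exact WithLp.ofLp_injective 2
    (Prod.ext (PiLp.ext fun i => congr($(hH i) v)) (PiLp.ext fun r => congr($(hK r) v)))

lemma adjoint_combOp :
    adjoint (combOp T R) = combOp (fun k => adjoint (T k)) (fun r => adjoint (R r)) := by
  refine ((eq_adjoint_iff _ _).mpr fun x y => ?_).symm
  simp [combOp, WithLp.prod_inner_apply, PiLp.inner_apply, adjoint_inner_left]

variable (H K) in
noncomputable def blockDiagonal : StarSubalgebra ℂ (W →L[ℂ] W) where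
  carrier := {x | ∃ T R, x = combOp T R}
  mul_mem' := by
    rintro _ _ ⟨T, R, rfl⟩ ⟨T', R', rfl⟩
    exact ⟨fun k => T k * T' k, fun r => R r * R' r, rfl⟩
  one_mem' := ⟨fun _ => 1, fun _ => 1, rfl⟩
  add_mem' := by
    rintro _ _ ⟨T, R, rfl⟩ ⟨T', R', rfl⟩
    exact ⟨fun k => T k + T' k, fun r => R r + R' r, rfl⟩
  zero_mem' := ⟨0, 0, rfl⟩
  algebraMap_mem' c := by
    refine ⟨fun _ => c • 1, fun _ => c • 1, ?_⟩
    ext v : 1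
    refine WithLp.ofLp_injective 2 (Prod.ext (PiLp.ext fun i => ?_) (PiLp.ext fun r => ?_)) <;>
      simp [combOp, Algebra.algebraMap_eq_smul_one]
  star_mem' := by
    rintro _ ⟨T, R, rfl⟩
    exact ⟨_, _, adjoint_combOp T R⟩

end DirectSum

section Commutant

variable {Z : Type*} {N M : ℕ} {H : Fin N → Type*} [∀ k, NormedAddCommGroup (H k)]
  [∀ k, InnerProductSpace ℂ (H k)] [∀ k, FiniteDimensional ℂ (H k)]
  {K : Fin M → Type*} [∀ r, NormedAddCommGroup (K r)]
  [∀ r, InnerProductSpace ℂ (K r)] [∀ r, FiniteDimensional ℂ (K r)]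
  (Γ : ∀ k, Z → (H k →L[ℂ] H k)) (Ω : ∀ r, Z → (K r →L[ℂ] K r))

local notation "gen" => fun z => combOp (fun k => Γ k z) (fun r => Ω r z)

lemma intertwines_projH (i : Fin N) : Intertwines (Γ i) gen (projH i) :=
  fun z => (projH_comp_combOp (fun k => Γ k z) (fun r => Ω r z) i).symm

lemma intertwines_projK (r : Fin M) : Intertwines (Ω r) gen (projK r) :=
  fun z => (projK_comp_combOp (fun k => Γ k z) (fun r => Ω r z) r).symm

lemma intertwines_inclH (j : Fin N) : Intertwines gen (Γ j) (inclH j) :=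
  fun z => combOp_comp_inclH (fun k => Γ k z) (fun r => Ω r z) j

lemma intertwines_inclK (s : Fin M) : Intertwines gen (Ω s) (inclK s) :=
  fun z => combOp_comp_inclK (fun k => Γ k z) (fun r => Ω r z) s

theorem exists_eq_combOp_smul_one_of_commute [Star Z]
    (hΓstar : ∀ k z, Γ k (star z) = star (Γ k z)) (hΩstar : ∀ r z, Ω r (star z) = star (Ω r z))
    (hΓirr : ∀ k, HasScalarCommutant (Γ k)) (hΩirr : ∀ r, HasScalarCommutant (Ω r))
    (hsepΓΓ : ∀ j k : Fin N, j ≠ k → ∃ p : ℕ, ∃ zm : Matrix (Fin p) (Fin p) Z,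
      ‖matOp (zm.map (Γ j))‖ ≠ ‖matOp (zm.map (Γ k))‖)
    (hsepΩΩ : ∀ r s : Fin M, r ≠ s → ∃ p : ℕ, ∃ zm : Matrix (Fin p) (Fin p) Z,
      ‖matOp (zm.map (Ω r))‖ ≠ ‖matOp (zm.map (Ω s))‖)
    (hsepΓΩ : ∀ (k : Fin N) (r : Fin M), ∃ p : ℕ, ∃ zm : Matrix (Fin p) (Fin p) Z,
      ‖matOp (zm.map (Γ k))‖ ≠ ‖matOp (zm.map (Ω r))‖)
    {S : WithLp 2 (PiLp 2 H × PiLp 2 K) →L[ℂ] WithLp 2 (PiLp 2 H × PiLp 2 K)}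
    (hS : ∀ z, Commute (combOp (fun k => Γ k z) (fun r => Ω r z)) S) :
    ∃ (c : Fin N → ℂ) (d : Fin M → ℂ), S = combOp (fun k => c k • 1) (fun r => d r • 1) := by
  have hSgen : Intertwines gen gen S := fun z => (hS z).eq
  have rowH i : ∃ c : ℂ, projH i ∘L S = (c • 1 : H i →L[ℂ] H i) ∘L projH (K := K) i := by
    have hrow := (intertwines_projH Γ Ω i).comp hSgen
    obtain ⟨c, hc⟩ := (hΓirr i).exists_eq_smul_one (hrow.comp (intertwines_inclH Γ Ω i))
    refine ⟨c, ?_⟩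
    rw [eq_comp_projH_of_forall_comp_eq_zero
      (fun j hj => (hrow.comp (intertwines_inclH Γ Ω j)).eq_zero_of_norm_matOp_ne (hΓstar i)
        (hΓstar j) (hΓirr i) (hΓirr j) (hsepΓΓ i j hj.symm))
      (fun s => (hrow.comp (intertwines_inclK Γ Ω s)).eq_zero_of_norm_matOp_ne (hΓstar i)
        (hΩstar s) (hΓirr i) (hΩirr s) (hsepΓΩ i s)), hc]
  have rowK r : ∃ d : ℂ, projK r ∘L S = (d • 1 : K r →L[ℂ] K r) ∘L projK (H := H) r := by
    have hrow := (intertwines_projK Γ Ω r).comp hSgen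
    obtain ⟨d, hd⟩ := (hΩirr r).exists_eq_smul_one (hrow.comp (intertwines_inclK Γ Ω r))
    refine ⟨d, ?_⟩
    rw [eq_comp_projK_of_forall_comp_eq_zero
      (fun j => (hrow.comp (intertwines_inclH Γ Ω j)).eq_zero_of_norm_matOp_ne (hΩstar r)
        (hΓstar j) (hΩirr r) (hΓirr j) ((hsepΓΩ j r).imp fun _ ⟨zm, h⟩ => ⟨zm, h.symm⟩))
      (fun s hs => (hrow.comp (intertwines_inclK Γ Ω s)).eq_zero_of_norm_matOp_ne (hΩstar r)
        (hΩstar s) (hΩirr r) (hΩirr s) (hsepΩΩ r s hs.symm)), hd]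
  choose c hc using rowH
  choose d hd using rowK
  exact ⟨c, d, eq_combOp_of_forall _ _ hc hd⟩

end Commutant

theorem starAdjoin_SGammaOmega_eq_directSum_general
    {Z : Type*} [AddCommGroup Z] [Module ℂ Z] [StarAddMonoid Z]
    {N M : ℕ} {H : Fin N → Type*} [∀ k, NormedAddCommGroup (H k)]
    [∀ k, InnerProductSpace ℂ (H k)] [∀ k, FiniteDimensional ℂ (H k)]
    {K : Fin M → Type*} [∀ r, NormedAddCommGroup (K r)]
    [∀ r, InnerProductSpace ℂ (K r)] [∀ r, FiniteDimensional ℂ (K r)]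
    (Γ : ∀ k : Fin N, Z →ₗ[ℂ] (H k →L[ℂ] H k))
    (Ω : ∀ r : Fin M, Z →ₗ[ℂ] (K r →L[ℂ] K r))
    (hΓstar : ∀ k z, Γ k (star z) = star (Γ k z))
    (hΩstar : ∀ r z, Ω r (star z) = star (Ω r z))
    (hΓirr : ∀ k, ∀ T : H k →L[ℂ] H k,
      (∀ z : Z, T * Γ k z = Γ k z * T) → ∃ c : ℂ, T = c • (1 : H k →L[ℂ] H k))
    (hΩirr : ∀ r, ∀ T : K r →L[ℂ] K r,
      (∀ z : Z, T * Ω r z = Ω r z * T) → ∃ c : ℂ, T = c • (1 : K r →L[ℂ] K r))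
    (hsepΓΓ : ∀ j k : Fin N, j ≠ k → ∃ p : ℕ, ∃ zm : Matrix (Fin p) (Fin p) Z,
      ‖matOp (zm.map (Γ j))‖ ≠ ‖matOp (zm.map (Γ k))‖)
    (hsepΩΩ : ∀ r s : Fin M, r ≠ s → ∃ p : ℕ, ∃ zm : Matrix (Fin p) (Fin p) Z,
      ‖matOp (zm.map (Ω r))‖ ≠ ‖matOp (zm.map (Ω s))‖)
    (hsepΓΩ : ∀ (k : Fin N) (r : Fin M), ∃ p : ℕ, ∃ zm : Matrix (Fin p) (Fin p) Z,
      ‖matOp (zm.map (Γ k))‖ ≠ ‖matOp (zm.map (Ω r))‖) :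
    ((StarAlgebra.adjoin ℂ
        {x : WithLp 2 (PiLp 2 H × PiLp 2 K) →L[ℂ] WithLp 2 (PiLp 2 H × PiLp 2 K) |
          ∃ z : Z, x = combOp (fun k => Γ k z) (fun r => Ω r z)} :
        StarSubalgebra ℂ _) : Set _)
      = {x : WithLp 2 (PiLp 2 H × PiLp 2 K) →L[ℂ] WithLp 2 (PiLp 2 H × PiLp 2 K) |
          ∃ (T : ∀ k, H k →L[ℂ] H k) (R : ∀ r, K r →L[ℂ] K r), x = combOp T R} := by
  apply subset_antisymm
  · exact StarAlgebra.adjoin_le (S := blockDiagonal H K) (by rintro _ ⟨z, rfl⟩; exact ⟨_, _, rfl⟩)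
  · rintro _ ⟨T, R, rfl⟩
    rw [← StarSubalgebra.centralizer_centralizer_eq_of_finiteDimensional]
    intro S hS
    obtain ⟨c, d, rfl⟩ := exists_eq_combOp_smul_one_of_commute (fun k => Γ k) (fun r => Ω r)
      hΓstar hΩstar hΓirr hΩirr hsepΓΓ hsepΩΩ hsepΓΩ
      fun z => hS _ (StarAlgebra.subset_adjoin ℂ _ ⟨z, rfl⟩)
    change combOp (fun k => c k • 1 * T k) (fun r => d r • 1 * R r)
      = combOp (fun k => T k * c k • 1) (fun r => R r * d r • 1)
    simp only [smul_one_mul, mul_smul_one]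

/-- Lemma 6.1 of the paper.  Given unital self-adjoint linear maps
`Γ_k : Z → B(H_k)` and `Ω_r : Z → B(K_r)` with irreducible ranges such that any two of
the `M + N` coordinate maps are distinguished by the norm of some matrix over `Z`, the
C*-algebra generated by `S_{Γ,Ω} = {Γ₁(z) ⊕ ⋯ ⊕ Γ_N(z) ⊕ Ω₁(z) ⊕ ⋯ ⊕ Ω_M(z) : z ∈ Z}`
is the full direct sum `B(H₁) ⊕ ⋯ ⊕ B(H_N) ⊕ B(K₁) ⊕ ⋯ ⊕ B(K_M)`. -/
theorem starAdjoin_SGammaOmega_eq_directSum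
    {Z : Type*} [AddCommGroup Z] [Module ℂ Z] [StarAddMonoid Z] [StarModule ℂ Z]
    [FiniteDimensional ℂ Z] (e : Z) (he : star e = e) (hene : e ≠ 0)
    {N M : ℕ} {H : Fin N → Type*} [∀ k, NormedAddCommGroup (H k)]
    [∀ k, InnerProductSpace ℂ (H k)] [∀ k, FiniteDimensional ℂ (H k)]
    [∀ k, Nontrivial (H k)]
    {K : Fin M → Type*} [∀ r, NormedAddCommGroup (K r)]
    [∀ r, InnerProductSpace ℂ (K r)] [∀ r, FiniteDimensional ℂ (K r)]
    [∀ r, Nontrivial (K r)]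
    (Γ : ∀ k : Fin N, Z →ₗ[ℂ] (H k →L[ℂ] H k))
    (Ω : ∀ r : Fin M, Z →ₗ[ℂ] (K r →L[ℂ] K r))
    (hΓstar : ∀ k z, Γ k (star z) = star (Γ k z))
    (hΩstar : ∀ r z, Ω r (star z) = star (Ω r z))
    (hΓunit : ∀ k, Γ k e = 1) (hΩunit : ∀ r, Ω r e = 1)
    (hΓirr : ∀ k, ∀ T : H k →L[ℂ] H k,
      (∀ z : Z, T * Γ k z = Γ k z * T) → ∃ c : ℂ, T = c • (1 : H k →L[ℂ] H k))
    (hΩirr : ∀ r, ∀ T : K r →L[ℂ] K r,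
      (∀ z : Z, T * Ω r z = Ω r z * T) → ∃ c : ℂ, T = c • (1 : K r →L[ℂ] K r))
    (hsepΓΓ : ∀ j k : Fin N, j ≠ k → ∃ p : ℕ, ∃ zm : Matrix (Fin p) (Fin p) Z,
      ‖matOp (zm.map (Γ j))‖ ≠ ‖matOp (zm.map (Γ k))‖)
    (hsepΩΩ : ∀ r s : Fin M, r ≠ s → ∃ p : ℕ, ∃ zm : Matrix (Fin p) (Fin p) Z,
      ‖matOp (zm.map (Ω r))‖ ≠ ‖matOp (zm.map (Ω s))‖)
    (hsepΓΩ : ∀ (k : Fin N) (r : Fin M), ∃ p : ℕ, ∃ zm : Matrix (Fin p) (Fin p) Z,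
      ‖matOp (zm.map (Γ k))‖ ≠ ‖matOp (zm.map (Ω r))‖) :
    ((StarAlgebra.adjoin ℂ
        {x : WithLp 2 (PiLp 2 H × PiLp 2 K) →L[ℂ] WithLp 2 (PiLp 2 H × PiLp 2 K) |
          ∃ z : Z, x = combOp (fun k => Γ k z) (fun r => Ω r z)} :
        StarSubalgebra ℂ _) : Set _)
      = {x : WithLp 2 (PiLp 2 H × PiLp 2 K) →L[ℂ] WithLp 2 (PiLp 2 H × PiLp 2 K) |
          ∃ (T : ∀ k, H k →L[ℂ] H k) (R : ∀ r, K r →L[ℂ] K r), x = combOp T R} :=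
  starAdjoin_SGammaOmega_eq_directSum_general Γ Ω hΓstar hΩstar hΓirr hΩirr hsepΓΓ hsepΩΩ hsepΓΩ
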